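/- arXiv:2001.07535 — 4 statements merged into one kernel-verified Lean document; each statement's English description precedes it below -/
import Mathlib

section
/- Let λ₂ > 0, p₂ ∈ ℝ, and suppose ẏ_ref ∈ W^{1,∞}(ℝ≥0, ℝ) is bounded. If the initial value η̄⁰ = −∫₀^∞ e^{−λ₂ s} λ₂ p₂ y_ref(s) ds is chosen, then the solution of η̄̇(t) = λ₂ η̄(t) + λ₂ p₂ y_ref(t), η̄(0) = η̄⁰, is bounded on ℝ≥0 and is given explicitly by η̄(t) = −∫_t^∞ e^{λ₂(t−s)} λ₂ p₂ y_ref(s) ds. -/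
/-!
With `b = λ₂ p₂ y_ref`, the ODE says that `g t = exp (-λ₂ t) * x t` has derivative
`exp (-λ₂ t) * b t`, which is integrable on `(0, ∞)` because `b` is bounded. Hence
`g t + ∫ s in Ioi t, exp (-λ₂ s) * b s` is constant, and the prescribed initial value makes this
constant zero; multiplying by `exp (λ₂ t)` gives the formula. The kernel `exp (λ₂ (t - s))` has
mass `1 / λ₂` on `s > t`, so `|x t| ≤ |p₂| * C` whenever `|y_ref| ≤ C`.
-/

open Real MeasureTheory Set

theorem add_integral_Ioi_eq_of_hasDerivAt {g f : ℝ → ℝ} {a t : ℝ} (hat : a ≤ t)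
    (hderiv : ∀ u ∈ Icc a t, HasDerivAt g (f u) u) (hf : IntegrableOn f (Ioi a)) :
    g t + ∫ s in Ioi t, f s = g a + ∫ s in Ioi a, f s := by
  have hftc : ∫ s in a..t, f s = g t - g a :=
    intervalIntegral.integral_eq_sub_of_hasDerivAt (by rwa [uIcc_of_le hat])
      ((intervalIntegrable_iff_integrableOn_Ioc_of_le hat).2 (hf.mono_set Ioc_subset_Ioi_self))
  linarith [intervalIntegral.integral_Ioi_sub_Ioi hf hat]

theorem hasDerivAt_exp_neg_mul_mul {x : ℝ → ℝ} {lam b t : ℝ}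
    (hx : HasDerivAt x (lam * x t + b) t) :
    HasDerivAt (fun u => exp (-lam * u) * x u) (exp (-lam * t) * b) t := by
  have hexp : HasDerivAt (fun u => exp (-lam * u)) (exp (-lam * t) * -lam) t := by
    simpa using ((hasDerivAt_id t).const_mul (-lam)).exp
  exact (hexp.mul hx).congr_deriv (by ring)

theorem exp_mul_sub_eq (lam t s : ℝ) : exp (lam * (t - s)) = exp (lam * t) * exp (-lam * s) := by
  rw [← exp_add]; congr 1; ring

theorem integrableOn_Ioi_exp_neg_mul {lam C a : ℝ} (hlam : 0 < lam) {b : ℝ → ℝ}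
    (hb : AEStronglyMeasurable b (volume.restrict (Ioi a))) (hbC : ∀ s > a, |b s| ≤ C) :
    IntegrableOn (fun s => exp (-lam * s) * b s) (Ioi a) := by
  refine (exp_neg_integrableOn_Ioi a hlam).mul_bdd (c := C) hb ?_
  filter_upwards [ae_restrict_mem measurableSet_Ioi] with s hs using hbC s hs

theorem eq_neg_integral_Ioi_of_hasDerivAt {lam : ℝ} {x b : ℝ → ℝ}
    (hb : IntegrableOn (fun s => exp (-lam * s) * b s) (Ioi 0))
    (hx0 : x 0 = -∫ s in Ioi 0, exp (-lam * s) * b s)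
    (hode : ∀ t ≥ (0:ℝ), HasDerivAt x (lam * x t + b t) t) {t : ℝ} (ht : 0 ≤ t) :
    x t = -∫ s in Ioi t, exp (lam * (t - s)) * b s := by
  have hconst := add_integral_Ioi_eq_of_hasDerivAt ht
    (fun u hu => hasDerivAt_exp_neg_mul_mul (hode u hu.1)) hb
  simp only [hx0, mul_zero, exp_zero, one_mul, neg_add_cancel] at hconst
  simp only [exp_mul_sub_eq, mul_assoc, integral_const_mul]
  have hinv : exp (lam * t) * exp (-lam * t) = 1 := by rw [← exp_add]; simp
  linear_combination exp (lam * t) * hconst - x t * hinv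

theorem abs_integral_Ioi_exp_mul_le {lam C t : ℝ} (hlam : 0 < lam) {b : ℝ → ℝ}
    (hbC : ∀ s > t, |b s| ≤ C) : |∫ s in Ioi t, exp (lam * (t - s)) * b s| ≤ C / lam := by
  have hkernel : ∫ s in Ioi t, C * exp (lam * (t - s)) = C / lam := by
    simp only [exp_mul_sub_eq, integral_const_mul, integral_exp_mul_Ioi (neg_neg_of_pos hlam)]
    have hinv : exp (lam * t) * exp (-lam * t) = 1 := by rw [← exp_add]; simp
    rw [neg_mul] at hinv
    field_simp
    linear_combination C * hinv
  rw [← Real.norm_eq_abs, ← hkernel]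
  refine norm_integral_le_of_norm_le ?_ ?_
  · simpa only [exp_mul_sub_eq, ← mul_assoc] using
      (exp_neg_integrableOn_Ioi t hlam).const_mul (C * exp (lam * t))
  · filter_upwards [ae_restrict_mem measurableSet_Ioi] with s hs
    rw [norm_mul, norm_of_nonneg (exp_pos _).le, mul_comm]
    exact mul_le_mul_of_nonneg_right (hbC s hs) (exp_pos _).le

/-- With the initial value η̄⁰ = −∫₀^∞ e^{−λ₂s} λ₂p₂ y_ref(s) ds, the solution of
    η̄' = λ₂η̄ + λ₂p₂y_ref is bounded on ℝ≥0 and given by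
    η̄(t) = −∫ₜ^∞ e^{λ₂(t−s)} λ₂p₂ y_ref(s) ds. -/
theorem bounded_reference_solution (lam₂ p₂ : ℝ) (hlam : lam₂ > 0)
    (y_ref : ℝ → ℝ) (hmeas : Measurable y_ref)
    (hbdd : ∃ C, ∀ t ≥ (0:ℝ), |y_ref t| ≤ C)
    (x : ℝ → ℝ)
    (hx0 : x 0 = -∫ s in Ioi (0:ℝ), Real.exp (-lam₂ * s) * lam₂ * p₂ * y_ref s)
    (hode : ∀ t ≥ (0:ℝ), HasDerivAt x (lam₂ * x t + lam₂ * p₂ * y_ref t) t) :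
    (∃ C, ∀ t ≥ (0:ℝ), |x t| ≤ C) ∧
    (∀ t ≥ (0:ℝ), x t = -∫ s in Ioi t, Real.exp (lam₂ * (t - s)) * lam₂ * p₂ * y_ref s) := by
  obtain ⟨C, hC⟩ := hbdd
  have hbC : ∀ s ≥ (0:ℝ), |lam₂ * p₂ * y_ref s| ≤ lam₂ * |p₂| * C := fun s hs => by
    rw [abs_mul, abs_mul, abs_of_pos hlam]
    gcongr
    exact hC s hs
  have hint : IntegrableOn (fun s => exp (-lam₂ * s) * (lam₂ * p₂ * y_ref s)) (Ioi 0) :=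
    integrableOn_Ioi_exp_neg_mul hlam (by fun_prop) fun s hs => hbC s hs.le
  have hformula : ∀ t ≥ (0:ℝ), x t = -∫ s in Ioi t, exp (lam₂ * (t - s)) * (lam₂ * p₂ * y_ref s) :=
    fun t ht => eq_neg_integral_Ioi_of_hasDerivAt hint (by simpa only [mul_assoc] using hx0) hode ht
  refine ⟨⟨|p₂| * C, fun t ht => ?_⟩, fun t ht => by simpa only [mul_assoc] using hformula t ht⟩
  calc |x t| ≤ lam₂ * |p₂| * C / lam₂ := by
        rw [hformula t ht, abs_neg]
        exact abs_integral_Ioi_exp_mul_le hlam fun s hs => hbC s (ht.trans hs.le)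
    _ = |p₂| * C := by field_simp
end

section
/- With s = l, for every x = (x₁,x₂,x₃,x₄) with cos(x₂) > 2/3, the second-order Lie derivative satisfies (L_g L_f h)(x) = [1, 1/2] M(x₂)⁻¹ [1, 0]ᵀ = (36/(l²m(16 − 9cos²(x₂)))) (1/3 − (1/2)(1/3 + (1/2)cos(x₂))), and this is nonzero; hence the manipulator system has relative degree 2 on the set {x : cos(x₂) > 2/3}. -/
open Real Matrix

/-- Second Lie derivative (relative degree 2): for s = l,
    (L_g L_f h)(x) = [1,1/2] M(x₂)⁻¹ e₁ equals the explicit expression and is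
    nonzero on the set cos x₂ > 2/3; together with L_g h = 0 this means the
    manipulator has relative degree 2 there. -/
theorem relative_degree_two (l m : ℝ) (hl : l > 0) (hm : m > 0)
    (x : Fin 4 → ℝ) (hx : Real.cos (x 1) > 2/3) :
    let M : Matrix (Fin 2) (Fin 2) ℝ :=
      (l^2 * m) • !![5/3 + Real.cos (x 1), 1/3 + (1/2) * Real.cos (x 1);
                     1/3 + (1/2) * Real.cos (x 1), 1/3]
    let g : Fin 4 → ℝ := ![0, 0, (M⁻¹).mulVec ![1, 0] 0, (M⁻¹).mulVec ![1, 0] 1]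
    (![1, 1/2, 0, 0] ⬝ᵥ g) = 0 ∧
    (![0, 0, 1, 1/2] ⬝ᵥ g) = ![(1:ℝ), 1/2] ⬝ᵥ (M⁻¹).mulVec ![1, 0] ∧
    (![(1:ℝ), 1/2] ⬝ᵥ (M⁻¹).mulVec ![1, 0]) =
      (36 / (l^2 * m * (16 - 9 * (Real.cos (x 1))^2))) *
        (1/3 - (1/2) * (1/3 + (1/2) * Real.cos (x 1))) ∧
    (![(1:ℝ), 1/2] ⬝ᵥ (M⁻¹).mulVec ![1, 0]) ≠ 0 := by
  intro M g
  set c := Real.cos (x 1) with hc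
  have hc1 : c ≤ 1 := Real.cos_le_one _
  have hc2 : c > 2/3 := hx
  have hlm : l^2 * m ≠ 0 := by positivity
  have hdetpos : 16 - 9 * c^2 > 0 := by nlinarith
  have hdet : M.det = (l^2*m)^2 * ((16 - 9*c^2)/36) := by
    simp [M, Matrix.det_fin_two, Matrix.smul_apply]
    ring
  have hdetne : M.det ≠ 0 := by
    rw [hdet]; positivity
  have hinv : M⁻¹ = M.det⁻¹ • M.adjugate := by
    rw [Matrix.inv_def, Ring.inverse_eq_inv]
  have key : (![(1:ℝ), 1/2] ⬝ᵥ (M⁻¹).mulVec ![1, 0]) =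
      (36 / (l^2 * m * (16 - 9 * c^2))) * (1/3 - (1/2) * (1/3 + (1/2) * c)) := by
    rw [hinv, hdet]
    simp [M, Matrix.adjugate_fin_two, Matrix.mulVec, dotProduct,
      Fin.sum_univ_two, Matrix.smul_apply]
    field_simp
    ring
  refine ⟨?_, ?_, key, ?_⟩
  · simp [g, dotProduct, Fin.sum_univ_four]
  · simp [g, dotProduct, Fin.sum_univ_four, Fin.sum_univ_two]
  · rw [key]
    have h1 : 1/3 - (1/2) * (1/3 + (1/2) * c) < 0 := by nlinarith
    have h2 : 36 / (l^2 * m * (16 - 9 * c^2)) > 0 := by positivity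
    exact ne_of_lt (by nlinarith)
end

section
/- Define φ₂(x) = [1/3 + (1/2)cos(x₂), 1/3]·(x₃, x₄)ᵀ on U = {x ∈ ℝ⁴ : cos(x₂) > 2/3} and g(x) = diag(I₂, M(x₂)⁻¹)[0,0,1,0]ᵀ with M the manipulator mass matrix. Then (L_g φ₂)(x) = φ₂'(x) g(x) = 0 for all x ∈ U. -/
open Real Matrix

/-- The Lie derivative L_g φ₂ vanishes, where
    φ₂(x) = (1/3 + (1/2)cos x₂)x₃ + (1/3)x₄, i.e. the gradient of φ₂ dotted with g is 0. -/
theorem lie_derivative_Lgphi2_zero (l m : ℝ) (hl : l > 0) (hm : m > 0)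
    (x : Fin 4 → ℝ) (hx : Real.cos (x 1) > 2/3) :
    let M : Matrix (Fin 2) (Fin 2) ℝ :=
      (l^2 * m) • !![5/3 + Real.cos (x 1), 1/3 + (1/2) * Real.cos (x 1);
                     1/3 + (1/2) * Real.cos (x 1), 1/3]
    let g : Fin 4 → ℝ := ![0, 0, (M⁻¹).mulVec ![1, 0] 0, (M⁻¹).mulVec ![1, 0] 1]
    (![0, -(1/2) * Real.sin (x 1) * x 2, 1/3 + (1/2) * Real.cos (x 1), 1/3] ⬝ᵥ g) = 0 := by
  intro M g
  simp only [g, M, Matrix.inv_def, Matrix.adjugate_fin_two, Matrix.mulVec, dotProduct,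
    Fin.sum_univ_four, Fin.sum_univ_two, Matrix.smul_apply, Matrix.of_apply,
    Matrix.cons_val', Matrix.cons_val_zero, Matrix.cons_val_one, Matrix.head_cons,
    Matrix.cons_val_two, Matrix.cons_val_three, Matrix.tail_cons,
    Matrix.head_fin_const, Matrix.empty_val', Matrix.cons_val_fin_one, smul_eq_mul]
  generalize Ring.inverse ((l ^ 2 * m) • !![5 / 3 + Real.cos (x 1),
    1 / 3 + 1 / 2 * Real.cos (x 1); 1 / 3 + 1 / 2 * Real.cos (x 1), 1 / 3] :
    Matrix (Fin 2) (Fin 2) ℝ).det = d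
  ring
end

section
/- Let Φ : U → ℝ⁴, Φ(x) = (x₁ + (1/2)x₂, x₃ + (1/2)x₄, x₂, (1/3 + (1/2)cos(x₂))x₃ + (1/3)x₄) on U = {x ∈ ℝ⁴ : cos(x₂) > 2/3}. Then the Jacobian Φ'(x) is invertible for every x ∈ U, so Φ is a local diffeomorphism on U. -/
/-!
Swapping the second and third rows of the Jacobian of Φ makes it block lower triangular, with
diagonal blocks `[[1, 1/2], [0, 1]]` and `[[1, 1/2], [1/3 + (1/2) cos x₂, 1/3]]`. Hence
`det Φ'(x) = cos x₂ / 4 - 1/6`, which does not vanish when `cos x₂ > 2/3`.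
-/

open Real

noncomputable def byrnesIsidori (x : Fin 4 → ℝ) : Fin 4 → ℝ :=
  ![x 0 + (1/2) * x 1,
    x 2 + (1/2) * x 3,
    x 1,
    (1/3 + (1/2) * cos (x 1)) * x 2 + (1/3) * x 3]

noncomputable def byrnesIsidoriJacobian (x : Fin 4 → ℝ) : Matrix (Fin 4) (Fin 4) ℝ :=
  !![1, 1/2, 0, 0;
     0, 0, 1, 1/2;
     0, 1, 0, 0;
     0, -(1/2) * sin (x 1) * x 2, 1/3 + (1/2) * cos (x 1), 1/3]

theorem hasFDerivAt_byrnesIsidori (x : Fin 4 → ℝ) :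
    HasFDerivAt byrnesIsidori
      (LinearMap.toContinuousLinearMap (Matrix.toLin' (byrnesIsidoriJacobian x))) x := by
  have hcoord (j : Fin 4) := hasFDerivAt_apply (𝕜 := ℝ) j x
  have hcos := (hasDerivAt_cos (x 1)).comp_hasFDerivAt x (hcoord 1)
  refine hasFDerivAt_pi'' fun i => ?_
  fin_cases i
  · exact ((hcoord 0).add ((hcoord 1).const_mul _)).congr_fderiv
      (by ext v; simp [byrnesIsidoriJacobian, dotProduct, Fin.sum_univ_four])
  · exact ((hcoord 2).add ((hcoord 3).const_mul _)).congr_fderiv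
      (by ext v; simp [byrnesIsidoriJacobian, dotProduct, Fin.sum_univ_four])
  · exact (hcoord 1).congr_fderiv
      (by ext v; simp [byrnesIsidoriJacobian, dotProduct, Fin.sum_univ_four])
  · exact ((((hasFDerivAt_const _ x).add (hcos.const_mul _)).mul (hcoord 2)).add
      ((hcoord 3).const_mul _)).congr_fderiv
      (by ext v; simp [byrnesIsidoriJacobian, dotProduct, Fin.sum_univ_four]; ring)

theorem det_byrnesIsidoriJacobian (x : Fin 4 → ℝ) :
    (byrnesIsidoriJacobian x).det = cos (x 1) / 4 - 1/6 := by
  simp [byrnesIsidoriJacobian, Matrix.det_succ_row_zero, Fin.sum_univ_succ]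
  ring

/-- The Byrnes–Isidori transformation Φ has invertible Jacobian on
    U = {x : cos x₂ > 2/3}, i.e. its Fréchet derivative at each point of U
    is a continuous linear equivalence (so Φ is a local diffeomorphism on U). -/
theorem BI_transformation_local_diffeo :
    let Φ : (Fin 4 → ℝ) → (Fin 4 → ℝ) := fun x =>
      ![x 0 + (1/2) * x 1,
        x 2 + (1/2) * x 3,
        x 1,
        (1/3 + (1/2) * Real.cos (x 1)) * x 2 + (1/3) * x 3]
    ∀ x : Fin 4 → ℝ, Real.cos (x 1) > 2/3 →
      ∃ e : (Fin 4 → ℝ) ≃L[ℝ] (Fin 4 → ℝ),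
        HasFDerivAt Φ (e : (Fin 4 → ℝ) →L[ℝ] (Fin 4 → ℝ)) x := by
  intro Φ x hx
  set J := byrnesIsidoriJacobian x
  have hdet : J.det ≠ 0 := by
    rw [det_byrnesIsidoriJacobian]
    linarith
  exact ⟨(J.toLinearEquiv' (J.invertibleOfIsUnitDet hdet.isUnit)).toContinuousLinearEquiv,
    hasFDerivAt_byrnesIsidori x⟩
end
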